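/- Let G and H be chain graphs with I(H) ⊆ I(G). For any component C of G, there exists a unique component of H that is maximal in H among the components of H containing a descendant of C in G. -/

import Mathlib

/-- A hybrid graph over a vertex set `V`: it has directed edges (`dir`) and
undirected edges (`undir`, stored as a symmetric irreflexive relation). -/
structure HybridGraph (V : Type) where
  dir : V → V → Prop
  undir : V → V → Prop
  dir_irrefl : ∀ x, ¬ dir x x
  undir_irrefl : ∀ x, ¬ undir x x
  undir_symm : ∀ x y, undir x y → undir y x

namespace HybridGraph

variable {V : Type}

/-- Two nodes are adjacent if joined by a directed or undirected edge. -/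
def adj (G : HybridGraph V) (x y : V) : Prop :=
  G.dir x y ∨ G.dir y x ∨ G.undir x y

/-- One step of a descending route: `x − y` or `x → y`. -/
def descStep (G : HybridGraph V) (x y : V) : Prop := G.dir x y ∨ G.undir x y

/-- `y` is a descendant of `x`: there is a descending route from `x` to `y`
(routes of length zero allowed). -/
def descendant (G : HybridGraph V) : V → V → Prop :=
  Relation.ReflTransGen G.descStep

/-- There is an undirected route between `x` and `y` (length zero allowed). -/
def uconn (G : HybridGraph V) : V → V → Prop :=
  Relation.ReflTransGen G.undir

/-- A chain is modeled by a function `f : V → ℕ` assigning each node the index of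
its block.  `G` is consistent with the chain `f` if directed edges go strictly
left-to-right and undirected edges stay within a block. -/
def ConsistentWith (G : HybridGraph V) (f : V → ℕ) : Prop :=
  (∀ x y, G.dir x y → f x < f y) ∧ (∀ x y, G.undir x y → f x = f y)

/-- A chain graph is a hybrid graph consistent with some chain. -/
def IsChainGraph (G : HybridGraph V) : Prop := ∃ f : V → ℕ, G.ConsistentWith f

/-- The component (maximal undirected-connected set) containing `x`. -/
def component (G : HybridGraph V) (x : V) : Set V := {y | G.uconn x y}

def IsComponent (G : HybridGraph V) (C : Set V) : Prop := ∃ x, C = G.component x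

/-- The descendants of a set of nodes. -/
def descendantsOf (G : HybridGraph V) (S : Set V) : Set V :=
  {y | ∃ x ∈ S, G.descendant x y}

/-- A component is terminal if its set of descendants is exactly itself. -/
def IsTerminal (G : HybridGraph V) (C : Set V) : Prop := G.descendantsOf C = C

/-- Parents of a set of nodes. -/
def Pa (G : HybridGraph V) (S : Set V) : Set V := {x | ∃ y ∈ S, G.dir x y}

/-- Neighbors of a set of nodes. -/
def nbr (G : HybridGraph V) (S : Set V) : Set V := {x | ∃ y ∈ S, G.undir x y}

/-- Boundary of a node: parents together with neighbors. -/
def Bd (G : HybridGraph V) (x : V) : Set V := {y | G.dir y x ∨ G.undir y x}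

inductive EdgeKind | fwd | bwd | und
deriving DecidableEq

/-- A route in `G` of length `n`: nodes `φ 0, …, φ n`, where the `i`-th edge is
directed forwards, directed backwards, or undirected according to `kind i`. -/
structure Route (G : HybridGraph V) where
  n : ℕ
  φ : ℕ → V
  kind : ℕ → EdgeKind
  valid : ∀ i < n,
    (kind i = EdgeKind.fwd → G.dir (φ i) (φ (i+1))) ∧
    (kind i = EdgeKind.bwd → G.dir (φ (i+1)) (φ i)) ∧
    (kind i = EdgeKind.und → G.undir (φ i) (φ (i+1)))

namespace Route

variable {G : HybridGraph V}

/-- Positions `a ≤ k ≤ b` form a collider section of the route: a maximal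
undirected subroute entered by an arrowhead on both sides. -/
def ColliderSec (ρ : Route G) (a b : ℕ) : Prop :=
  a ≤ b ∧ b < ρ.n ∧ 0 < a ∧
  (∀ i, a ≤ i → i < b → ρ.kind i = EdgeKind.und) ∧
  ρ.kind (a-1) = EdgeKind.fwd ∧ ρ.kind b = EdgeKind.bwd

/-- Position `k` lies in a collider section of the route. -/
def ColliderPos (ρ : Route G) (k : ℕ) : Prop :=
  ∃ a b, a ≤ k ∧ k ≤ b ∧ ρ.ColliderSec a b

/-- A route is `Z`-active when every collider section has a node in `Z` and every
non-collider section has no node in `Z`. -/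
def ZActive (ρ : Route G) (Z : Set V) : Prop :=
  (∀ a b, ρ.ColliderSec a b → ∃ k, a ≤ k ∧ k ≤ b ∧ ρ.φ k ∈ Z) ∧
  (∀ k, k ≤ ρ.n → ¬ ρ.ColliderPos k → ρ.φ k ∉ Z)

end Route

/-- Separation `X ⫫_G Y | Z`: no `Z`-active route between a node of `X` and a
node of `Y`. -/
def Sep (G : HybridGraph V) (X Y Z : Set V) : Prop :=
  ¬ ∃ ρ : Route G, ρ.φ 0 ∈ X ∧ ρ.φ ρ.n ∈ Y ∧ ρ.ZActive Z

/-- `I(H) ⊆ I(G)`: every separation statement of `H` is one of `G`. -/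
def ModelLe (H G : HybridGraph V) : Prop :=
  ∀ X Y Z : Set V, Disjoint X Y → Disjoint X Z → Disjoint Y Z →
    H.Sep X Y Z → G.Sep X Y Z

/-- Result of splitting the component `C` into `C \ L` and `L`: every undirected
edge from `C \ L` to `L` becomes directed towards `L`. -/
def splitGraph (G : HybridGraph V) (C L : Set V) : HybridGraph V where
  dir x y := G.dir x y ∨ (x ∈ C \ L ∧ y ∈ L ∧ G.undir x y)
  undir x y := G.undir x y ∧ ¬((x ∈ C \ L ∧ y ∈ L) ∨ (y ∈ C \ L ∧ x ∈ L))
  dir_irrefl := by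
    intro x h
    rcases h with h | ⟨hx, hy, _⟩
    · exact G.dir_irrefl x h
    · exact hx.2 hy
  undir_irrefl := fun x h => G.undir_irrefl x h.1
  undir_symm := by
    intro x y h
    exact ⟨G.undir_symm x y h.1, fun hc => h.2 (Or.symm hc)⟩

/-- `H` is obtained from `G` by a feasible split of a component `C` into the two
nonempty connected parts `C \ L` and `L`. -/
def IsFeasibleSplit (G H : HybridGraph V) : Prop :=
  ∃ C L : Set V, G.IsComponent C ∧ L ⊆ C ∧ L.Nonempty ∧ (C \ L).Nonempty ∧
    (∀ x ∈ L, ∀ y ∈ L, G.uconn x y) ∧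
    (∀ x ∈ C \ L, ∀ y ∈ C \ L, G.uconn x y) ∧
    (∀ x ∈ G.nbr L ∩ (C \ L), ∀ y ∈ G.nbr L ∩ (C \ L), x ≠ y → G.undir x y) ∧
    (∀ x ∈ G.Pa L, ∀ y ∈ G.nbr L ∩ (C \ L), G.dir x y) ∧
    H = G.splitGraph C L

/-- Result of merging the components `L` and `R`: every directed edge from `L`
to `R` becomes undirected. -/
def mergeGraph (G : HybridGraph V) (L R : Set V) : HybridGraph V where
  dir x y := G.dir x y ∧ ¬(x ∈ L ∧ y ∈ R)
  undir x y := G.undir x y ∨ (x ∈ L ∧ y ∈ R ∧ G.dir x y) ∨ (y ∈ L ∧ x ∈ R ∧ G.dir y x)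
  dir_irrefl := fun x h => G.dir_irrefl x h.1
  undir_irrefl := by
    intro x h
    rcases h with h | ⟨_, _, h⟩ | ⟨_, _, h⟩
    · exact G.undir_irrefl x h
    · exact G.dir_irrefl x h
    · exact G.dir_irrefl x h
  undir_symm := by
    intro x y h
    rcases h with h | h | h
    · exact Or.inl (G.undir_symm x y h)
    · exact Or.inr (Or.inr h)
    · exact Or.inr (Or.inl h)

/-- `H` is obtained from `G` by a feasible merging of two components `L`, `R`. -/
def IsFeasibleMerge (G H : HybridGraph V) : Prop :=
  ∃ L R : Set V, G.IsComponent L ∧ G.IsComponent R ∧ L ≠ R ∧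
    (G.Pa R ∩ L).Nonempty ∧
    (∀ x ∈ G.Pa R ∩ L, ∀ y ∈ G.Pa R ∩ L, x ≠ y → G.undir x y) ∧
    (∀ x ∈ G.Pa R \ L, ∀ y ∈ G.Pa R ∩ L, G.dir x y) ∧
    H = G.mergeGraph L R

/-- `H` is obtained from `G` by adding a single (previously absent) directed or
undirected edge between two distinct nodes. -/
def IsEdgeAddition (G H : HybridGraph V) : Prop :=
  ∃ a b : V, a ≠ b ∧
    ((¬ G.dir a b ∧ (H.dir = fun x y => G.dir x y ∨ (x = a ∧ y = b)) ∧
        H.undir = G.undir) ∨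
     (¬ G.undir a b ∧ H.dir = G.dir ∧
        (H.undir = fun x y => G.undir x y ∨ (x = a ∧ y = b) ∨ (x = b ∧ y = a))))

/-- `H` is obtained from `G` by removing a single directed or undirected edge. -/
def IsEdgeRemoval (G H : HybridGraph V) : Prop :=
  ∃ a b : V,
    (G.dir a b ∧ (H.dir = fun x y => G.dir x y ∧ ¬(x = a ∧ y = b)) ∧
       H.undir = G.undir) ∨
    (G.undir a b ∧ H.dir = G.dir ∧
       (H.undir = fun x y => G.undir x y ∧ ¬((x = a ∧ y = b) ∨ (x = b ∧ y = a))))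

end HybridGraph

open HybridGraph

variable {V : Type}

/-- `X`, `Y`, `Z`, `W` are pairwise disjoint. -/
def PairwiseDisj (X Y Z W : Set V) : Prop :=
  Disjoint X Y ∧ Disjoint X Z ∧ Disjoint X W ∧
  Disjoint Y Z ∧ Disjoint Y W ∧ Disjoint Z W

/-- A graphoid: an independence model closed under symmetry, decomposition,
weak union, contraction and intersection (for pairwise disjoint arguments). -/
structure Graphoid (V : Type) where
  ind : Set V → Set V → Set V → Prop
  symm : ∀ X Y Z : Set V, Disjoint X Y → Disjoint X Z → Disjoint Y Z →
    ind X Y Z → ind Y X Z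
  decomp : ∀ X Y W Z : Set V, PairwiseDisj X Y Z W → ind X (Y ∪ W) Z → ind X Y Z
  weakUnion : ∀ X Y W Z : Set V, PairwiseDisj X Y Z W → ind X (Y ∪ W) Z →
    ind X Y (Z ∪ W)
  contraction : ∀ X Y W Z : Set V, PairwiseDisj X Y Z W → ind X Y (Z ∪ W) →
    ind X W Z → ind X (Y ∪ W) Z
  inter : ∀ X Y W Z : Set V, PairwiseDisj X Y Z W → ind X Y (Z ∪ W) →
    ind X W (Z ∪ Y) → ind X (Y ∪ W) Z

/-- `G` is an independence map of the model `M`: `I(G) ⊆ M`. -/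
def IsIMap (G : HybridGraph V) (M : Set V → Set V → Set V → Prop) : Prop :=
  ∀ X Y Z : Set V, Disjoint X Y → Disjoint X Z → Disjoint Y Z →
    G.Sep X Y Z → M X Y Z

/-- `Gα` is a minimal independence map of `M` relative to the chain `f`. -/
def IsMinIMapRel (M : Set V → Set V → Set V → Prop) (f : V → ℕ)
    (Gα : HybridGraph V) : Prop :=
  Gα.ConsistentWith f ∧ IsIMap Gα M ∧
    ∀ H : HybridGraph V, IsEdgeRemoval Gα H → ¬ IsIMap H M

/-!
Let `T` be the set of descendants of `C` in `G`. Any two points of `T` are descendants of a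
single node `c ∈ C`, hence joined in `G` by a collider-free route `x ← ⋯ ← c → ⋯ → y` inside `T`;
so no set disjoint from `T` separates them in `G`, and by `I(H) ⊆ I(G)` neither in `H`.

In every hybrid graph, `X` and `Y` are separated by their common ancestors: on any route, the
end of the longest initial segment without forward edges is a non-collider that is an ancestor
of the start, and of the end of the route or of a node in a collider section. If two distinct
components `D₁`, `D₂` of `H` were maximal, their common ancestors would avoid `T` and would
separate a point of `D₁ ∩ T` from one of `D₂ ∩ T`, a contradiction.

For existence, take a point of `T` in the lowest block of a chain of `H`: a descending route into
its component from another component meeting `T` stays within one block, so it is undirected.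
-/

lemma exists_maximal_run (P : ℕ → Prop) {l n : ℕ} (hln : l ≤ n) :
    ∃ k, l ≤ k ∧ k ≤ n ∧ (∀ j, l ≤ j → j < k → P j) ∧ (k < n → ¬ P k) := by
  classical
  by_cases h : ∃ j, l ≤ j ∧ j < n ∧ ¬ P j
  · obtain ⟨hl, hn, hP⟩ := Nat.find_spec h
    refine ⟨Nat.find h, hl, hn.le, fun j hlj hj => ?_, fun _ => hP⟩
    by_contra hPj
    exact Nat.find_min h hj ⟨hlj, hj.trans hn, hPj⟩
  · push Not at h
    exact ⟨n, hln, le_rfl, fun j hlj hj => h j hlj hj, fun h => absurd h (lt_irrefl n)⟩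

namespace HybridGraph

variable {G H : HybridGraph V}

instance (G : HybridGraph V) : Std.Symm G.undir := ⟨G.undir_symm⟩

lemma uconn_symm {x y : V} (h : G.uconn x y) : G.uconn y x :=
  symm_of (Relation.ReflTransGen G.undir) h

lemma descendant_of_uconn {x y : V} (h : G.uconn x y) : G.descendant x y :=
  Relation.ReflTransGen.mono (fun _ _ => Or.inr) _ _ h

lemma mem_component_self (x : V) : x ∈ G.component x := Relation.ReflTransGen.refl

lemma component_eq_of_uconn {x y : V} (h : G.uconn x y) : G.component x = G.component y := by
  ext z
  exact ⟨(uconn_symm h).trans, h.trans⟩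

lemma IsComponent.eq_component_of_mem {D : Set V} {x : V} (hD : G.IsComponent D) (hx : x ∈ D) :
    D = G.component x := by
  obtain ⟨w, rfl⟩ := hD
  exact component_eq_of_uconn hx

lemma IsComponent.uconn_of_mem {D : Set V} {x y : V} (hD : G.IsComponent D) (hx : x ∈ D)
    (hy : y ∈ D) : G.uconn x y := by
  obtain ⟨w, rfl⟩ := hD
  exact (uconn_symm hx).trans hy

lemma ConsistentWith.le_of_descendant {f : V → ℕ} (hf : G.ConsistentWith f) {x y : V}
    (h : G.descendant x y) : f x ≤ f y := by
  induction h with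
  | refl => exact le_rfl
  | tail _ hstep ih =>
    rcases hstep with h | h
    exacts [ih.trans (hf.1 _ _ h).le, ih.trans (hf.2 _ _ h).le]

lemma ConsistentWith.uconn_of_descendant {f : V → ℕ} (hf : G.ConsistentWith f) {x y : V}
    (h : G.descendant x y) (hyx : f y ≤ f x) : G.uconn x y := by
  induction h using Relation.ReflTransGen.head_induction_on with
  | refl => exact .refl
  | head hstep hrest ih =>
    have := hf.le_of_descendant hrest
    rcases hstep with h | h
    · exact absurd (hf.1 _ _ h) (by omega)
    · exact .head h (ih (by have := hf.2 _ _ h; omega))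

def Edge (G : HybridGraph V) : EdgeKind → V → V → Prop
  | .fwd, u, v => G.dir u v
  | .bwd, u, v => G.dir v u
  | .und, u, v => G.undir u v

lemma edge_iff {k : EdgeKind} {u v : V} : G.Edge k u v ↔
    (k = .fwd → G.dir u v) ∧ (k = .bwd → G.dir v u) ∧ (k = .und → G.undir u v) := by
  cases k <;> simp [Edge]

lemma descStep_of_edge {k : EdgeKind} {x y : V} (h : G.Edge k x y) (hk : k ≠ .bwd) :
    G.descStep x y := by
  cases k with
  | fwd => exact .inl h
  | bwd => exact absurd rfl hk
  | und => exact .inr h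

lemma descStep_of_edge_rev {k : EdgeKind} {x y : V} (h : G.Edge k x y) (hk : k ≠ .fwd) :
    G.descStep y x := by
  cases k with
  | fwd => exact absurd rfl hk
  | bwd => exact .inl h
  | und => exact .inr (G.undir_symm _ _ h)

lemma exists_edge_of_descStep {x y : V} (h : G.descStep x y) : ∃ k ≠ .bwd, G.Edge k x y :=
  h.elim (fun h => ⟨.fwd, by decide, h⟩) (fun h => ⟨.und, by decide, h⟩)

lemma exists_edge_rev_of_descStep {x y : V} (h : G.descStep x y) : ∃ k ≠ .fwd, G.Edge k y x :=
  h.elim (fun h => ⟨.bwd, by decide, h⟩) (fun h => ⟨.und, by decide, G.undir_symm _ _ h⟩)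

namespace Route

lemma edge (ρ : Route G) {i : ℕ} (hi : i < ρ.n) : G.Edge (ρ.kind i) (ρ.φ i) (ρ.φ (i + 1)) :=
  edge_iff.2 (ρ.valid i hi)

lemma descendant_of_ne_bwd (ρ : Route G) {l r : ℕ} (hlr : l ≤ r) (hr : r ≤ ρ.n)
    (h : ∀ i, l ≤ i → i < r → ρ.kind i ≠ .bwd) : G.descendant (ρ.φ l) (ρ.φ r) := by
  induction r, hlr using Nat.le_induction with
  | base => exact .refl
  | succ r hlr ih =>
    exact (ih (by omega) fun i h₁ h₂ => h i h₁ (by omega)).tail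
      (descStep_of_edge (ρ.edge (by omega)) (h r hlr (by omega)))

lemma descendant_of_ne_fwd (ρ : Route G) {l r : ℕ} (hlr : l ≤ r) (hr : r ≤ ρ.n)
    (h : ∀ i, l ≤ i → i < r → ρ.kind i ≠ .fwd) : G.descendant (ρ.φ r) (ρ.φ l) := by
  induction r, hlr using Nat.le_induction with
  | base => exact .refl
  | succ r hlr ih =>
    exact .head (descStep_of_edge_rev (ρ.edge (by omega)) (h r hlr (by omega)))
      (ih (by omega) fun i h₁ h₂ => h i h₁ (by omega))

lemma not_colliderPos_of_ne_fwd (ρ : Route G) {k : ℕ}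
    (h : ∀ j < k, ρ.kind j ≠ .fwd) : ¬ ρ.ColliderPos k := by
  rintro ⟨a, b, hak, -, -, -, ha, -, hfwd, -⟩
  exact h (a - 1) (by omega) hfwd

lemma exists_colliderSec_of_fwd_of_bwd (ρ : Route G) {k m : ℕ} (hkm : k < m) (hm : m < ρ.n)
    (hk : ρ.kind k = .fwd) (hmb : ρ.kind m = .bwd)
    (hmid : ∀ j, k ≤ j → j < m → ρ.kind j ≠ .bwd) : ∃ a, k < a ∧ ρ.ColliderSec a m := by
  classical
  -- the last forward edge before `m` opens the collider section
  set i := Nat.findGreatest (fun j => ρ.kind j = .fwd) (m - 1)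
  have hki : k ≤ i := Nat.le_findGreatest (by omega) hk
  have hi : ρ.kind i = .fwd := Nat.findGreatest_spec (P := fun j => ρ.kind j = .fwd) (by omega) hk
  have him : i ≤ m - 1 := Nat.findGreatest_le _
  refine ⟨i + 1, by omega, by omega, hm, by omega, fun j h₁ h₂ => ?_, by simpa using hi, hmb⟩
  have hnf : ρ.kind j ≠ .fwd :=
    Nat.findGreatest_is_greatest (P := fun j => ρ.kind j = .fwd) (n := m - 1) (by omega) (by omega)
  have hnb := hmid j (by omega) h₂
  revert hnf hnb
  cases ρ.kind j <;> simp

lemma exists_nonCollider_ancestor (ρ : Route G) {Z : Set V}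
    (hZ : ∀ a b, ρ.ColliderSec a b → ∃ p, a ≤ p ∧ p ≤ b ∧ ρ.φ p ∈ Z) :
    ∃ k ≤ ρ.n, ¬ ρ.ColliderPos k ∧ G.descendant (ρ.φ k) (ρ.φ 0) ∧
      (G.descendant (ρ.φ k) (ρ.φ ρ.n) ∨ ∃ z ∈ Z, G.descendant (ρ.φ k) z) := by
  obtain ⟨k, -, hkn, hpre, hk⟩ := exists_maximal_run (fun j => ρ.kind j ≠ .fwd) (Nat.zero_le ρ.n)
  obtain ⟨m, hkm, hmn, hmid, hm⟩ := exists_maximal_run (fun j => ρ.kind j ≠ .bwd) hkn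
  refine ⟨k, hkn, ρ.not_colliderPos_of_ne_fwd fun j => hpre j (Nat.zero_le j),
    ρ.descendant_of_ne_fwd (Nat.zero_le k) hkn hpre, ?_⟩
  rcases hmn.eq_or_lt with rfl | hmn
  · exact .inl (ρ.descendant_of_ne_bwd hkm le_rfl hmid)
  have hmb : ρ.kind m = .bwd := not_not.1 (hm hmn)
  have hkf : ρ.kind k = .fwd := not_not.1 (hk (by omega))
  have hkm : k < m := lt_of_le_of_ne hkm (by rintro rfl; simp [hkf] at hmb)
  obtain ⟨a, hka, hsec⟩ := ρ.exists_colliderSec_of_fwd_of_bwd hkm hmn hkf hmb hmid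
  obtain ⟨p, hap, hpm, hpZ⟩ := hZ a m hsec
  exact .inr ⟨_, hpZ, ρ.descendant_of_ne_bwd (by omega) (by omega)
    fun j h₁ h₂ => hmid j h₁ (by omega)⟩

def single (x : V) : Route G where
  n := 0
  φ _ := x
  kind _ := .und
  valid i hi := absurd hi (Nat.not_lt_zero i)

def cons (x : V) (k : EdgeKind) (ρ : Route G) (h : G.Edge k x (ρ.φ 0)) : Route G where
  n := ρ.n + 1
  φ | 0 => x | i + 1 => ρ.φ i
  kind | 0 => k | i + 1 => ρ.kind i
  valid
    | 0, _ => edge_iff.1 h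
    | i + 1, hi => ρ.valid i (by omega)

lemma not_colliderSec_cons {x : V} {k : EdgeKind} {ρ : Route G} {h : G.Edge k x (ρ.φ 0)}
    (hρ : ∀ a b, ¬ ρ.ColliderSec a b) (hk : k ≠ .fwd) :
    ∀ a b, ¬ (ρ.cons x k h).ColliderSec a b := by
  rintro (_ | _ | a) (_ | b) ⟨hab, hbn, ha, hund, hfwd, hbwd⟩ <;> try omega
  · exact hk hfwd
  · exact hρ (a + 1) b ⟨by omega, by simp [cons] at hbn; omega, by omega,
      fun i h₁ h₂ => hund (i + 1) (by omega) (by omega), hfwd, hbwd⟩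

end Route

lemma exists_route_of_descendant {x y : V} (h : G.descendant x y) :
    ∃ ρ : Route G, ρ.φ 0 = x ∧ ρ.φ ρ.n = y ∧ ∀ i < ρ.n, ρ.kind i ≠ .bwd := by
  induction h using Relation.ReflTransGen.head_induction_on with
  | refl => exact ⟨.single y, rfl, rfl, fun i hi => absurd hi (Nat.not_lt_zero i)⟩
  | head hstep _ ih =>
    obtain ⟨ρ, rfl, hρn, hρ⟩ := ih
    obtain ⟨k, hk, he⟩ := exists_edge_of_descStep hstep
    refine ⟨ρ.cons _ k he, rfl, hρn, ?_⟩
    rintro (_ | i) hi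
    exacts [hk, hρ i (Nat.lt_of_succ_lt_succ hi)]

lemma exists_colliderFree_route {c x y : V} (hx : G.descendant c x) (hy : G.descendant c y) :
    ∃ ρ : Route G, ρ.φ 0 = x ∧ ρ.φ ρ.n = y ∧ (∀ a b, ¬ ρ.ColliderSec a b) ∧
      ∀ k ≤ ρ.n, G.descendant c (ρ.φ k) := by
  induction hx with
  | refl =>
    obtain ⟨ρ, rfl, hρn, hρ⟩ := exists_route_of_descendant hy
    exact ⟨ρ, rfl, hρn, fun a b ⟨_, hb, _, _, _, hbwd⟩ => hρ b hb hbwd,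
      fun k hk => ρ.descendant_of_ne_bwd (Nat.zero_le k) hk fun i _ hi => hρ i (by omega)⟩
  | tail hcx hstep ih =>
    obtain ⟨ρ, rfl, hρn, hcol, hdesc⟩ := ih
    obtain ⟨k, hk, he⟩ := exists_edge_rev_of_descStep hstep
    refine ⟨ρ.cons _ k he, rfl, hρn, Route.not_colliderSec_cons hcol hk, ?_⟩
    rintro (_ | i) hi
    exacts [hcx.tail hstep, hdesc i (Nat.le_of_succ_le_succ hi)]

theorem not_sep_of_mem_descendantsOf {C Z : Set V} (hC : G.IsComponent C) {x y : V}
    (hx : x ∈ G.descendantsOf C) (hy : y ∈ G.descendantsOf C)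
    (hZ : Disjoint Z (G.descendantsOf C)) : ¬ G.Sep {x} {y} Z := by
  obtain ⟨c, hc, hcx⟩ := hx
  obtain ⟨c', hc', hc'y⟩ := hy
  have hcy : G.descendant c y := (descendant_of_uconn (hC.uconn_of_mem hc hc')).trans hc'y
  obtain ⟨ρ, h0, hn, hcol, hdesc⟩ := exists_colliderFree_route hcx hcy
  exact fun hsep => hsep ⟨ρ, h0, hn, fun a b hs => absurd hs (hcol a b),
    fun k hk _ hkZ => Set.disjoint_left.1 hZ hkZ ⟨c, hc, hdesc k hk⟩⟩

def ancestorsOf (G : HybridGraph V) (S : Set V) : Set V :=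
  {x | ∃ y ∈ S, G.descendant x y}

theorem sep_ancestorsOf_inter (G : HybridGraph V) (X Y : Set V) :
    G.Sep X Y (G.ancestorsOf X ∩ G.ancestorsOf Y) := by
  rintro ⟨ρ, hX, hY, hcol, hnon⟩
  obtain ⟨k, hkn, hnc, hk0, hkend⟩ := ρ.exists_nonCollider_ancestor hcol
  refine hnon k hkn hnc ⟨⟨_, hX, hk0⟩, ?_⟩
  rcases hkend with h | ⟨z, ⟨-, y, hy, hzy⟩, hkz⟩
  exacts [⟨_, hY, h⟩, ⟨y, hy, hkz.trans hzy⟩]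

def componentsMeeting (H : HybridGraph V) (T : Set V) : Set (Set V) :=
  {D | H.IsComponent D ∧ ∃ d ∈ D, d ∈ T}

def IsMaximalIn (H : HybridGraph V) (S : Set (Set V)) (D : Set V) : Prop :=
  D ∈ S ∧ ∀ x ∈ D, ¬ ∃ y ∈ ⋃₀ (S \ {D}), H.descendant y x

lemma component_mem_componentsMeeting {T : Set V} {t : V} (ht : t ∈ T) :
    H.component t ∈ H.componentsMeeting T :=
  ⟨⟨t, rfl⟩, t, mem_component_self t, ht⟩

lemma IsMaximalIn.component_eq {S : Set (Set V)} {D : Set V} {m x : V} (hD : H.IsMaximalIn S D)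
    (hm : H.component m ∈ S) (hmx : H.descendant m x) (hx : x ∈ D) : H.component m = D := by
  by_contra hne
  exact hD.2 x hx ⟨m, Set.mem_sUnion.2 ⟨_, ⟨hm, hne⟩, mem_component_self m⟩, hmx⟩

theorem exists_isMaximalIn_componentsMeeting {f : V → ℕ} (hf : H.ConsistentWith f) {T : Set V}
    (hT : T.Nonempty) : ∃ D, H.IsMaximalIn (H.componentsMeeting T) D := by
  obtain ⟨t, htT, hmin⟩ := exists_minimalFor_of_wellFoundedLT (· ∈ T) f hT
  refine ⟨H.component t, component_mem_componentsMeeting htT, ?_⟩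
  rintro x hx ⟨y, hy, hyx⟩
  obtain ⟨D', ⟨⟨hD', d', hd', hd'T⟩, hne⟩, hyD'⟩ := Set.mem_sUnion.1 hy
  have htd' : f t ≤ f d' := (le_total (f t) (f d')).elim id (hmin hd'T)
  have hd'y := hf.le_of_descendant (descendant_of_uconn (hD'.uconn_of_mem hd' hyD'))
  have hxt := hf.le_of_descendant (descendant_of_uconn (uconn_symm hx))
  have hyx' : H.uconn y x := hf.uconn_of_descendant hyx (by omega)
  exact hne ((hD'.eq_component_of_mem hyD').trans
    ((component_eq_of_uconn hyx').trans (component_eq_of_uconn hx).symm))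

theorem IsMaximalIn.eq_of_forall_not_sep {T : Set V}
    (hT : ∀ x ∈ T, ∀ y ∈ T, x ≠ y → ∀ Z, Disjoint Z T → ¬ H.Sep {x} {y} Z) {D₁ D₂ : Set V}
    (h₁ : H.IsMaximalIn (H.componentsMeeting T) D₁)
    (h₂ : H.IsMaximalIn (H.componentsMeeting T) D₂) : D₁ = D₂ := by
  by_contra hne
  obtain ⟨hD₁, d₁, hd₁, hd₁T⟩ := h₁.1
  obtain ⟨hD₂, d₂, hd₂, hd₂T⟩ := h₂.1
  have hd : d₁ ≠ d₂ := by
    rintro rfl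
    exact hne ((hD₁.eq_component_of_mem hd₁).trans (hD₂.eq_component_of_mem hd₂).symm)
  have hcommon : Disjoint (H.ancestorsOf D₁ ∩ H.ancestorsOf D₂) T := by
    refine Set.disjoint_left.2 fun m ⟨⟨x, hx, hmx⟩, y, hy, hmy⟩ hmT => hne ?_
    have hm := component_mem_componentsMeeting (H := H) hmT
    exact (h₁.component_eq hm hmx hx).symm.trans (h₂.component_eq hm hmy hy)
  exact hT d₁ hd₁T d₂ hd₂T hd _ hcommon fun ⟨ρ, h0, hn, hρ⟩ =>
    H.sep_ancestorsOf_inter D₁ D₂ ⟨ρ, (Set.mem_singleton_iff.1 h0) ▸ hd₁,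
      (Set.mem_singleton_iff.1 hn) ▸ hd₂, hρ⟩

end HybridGraph

theorem exists_unique_maximal_component_general (G H : HybridGraph V)
    (hH : H.IsChainGraph) (hle : ModelLe H G)
    (C : Set V) (hC : G.IsComponent C) :
    ∃! D : Set V,
      D ∈ {D' | H.IsComponent D' ∧ ∃ d ∈ D', ∃ c ∈ C, G.descendant c d} ∧
      ∀ x ∈ D,
        ¬ ∃ y ∈ ⋃₀ ({D' | H.IsComponent D' ∧ ∃ d ∈ D', ∃ c ∈ C, G.descendant c d} \ {D}),
          H.descendant y x := by
  show ∃! D, H.IsMaximalIn (H.componentsMeeting (G.descendantsOf C)) D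
  obtain ⟨f, hf⟩ := hH
  have hT : (G.descendantsOf C).Nonempty := by
    obtain ⟨c, rfl⟩ := hC
    exact ⟨c, c, mem_component_self c, .refl⟩
  obtain ⟨D, hD⟩ := exists_isMaximalIn_componentsMeeting hf hT
  refine ⟨D, hD, fun D' hD' => hD'.eq_of_forall_not_sep ?_ hD⟩
  intro x hx y hy hxy Z hZ hsep
  have hxZ : x ∉ Z := fun h => Set.disjoint_left.1 hZ h hx
  have hyZ : y ∉ Z := fun h => Set.disjoint_left.1 hZ h hy
  exact G.not_sep_of_mem_descendantsOf hC hx hy hZ <| hle _ _ _ (Set.disjoint_singleton.2 hxy)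
    (Set.disjoint_singleton_left.2 hxZ) (Set.disjoint_singleton_left.2 hyZ) hsep

/-- if `I(H) ⊆ I(G)`, then for any component `C` of `G` there is a
unique component of `H` that is maximal in `H` among those components of `H`
containing a descendant of `C` in `G`. -/
theorem exists_unique_maximal_component [Fintype V] (G H : HybridGraph V)
    (hG : G.IsChainGraph) (hH : H.IsChainGraph) (hle : ModelLe H G)
    (C : Set V) (hC : G.IsComponent C) :
    ∃! D : Set V,
      D ∈ {D' | H.IsComponent D' ∧ ∃ d ∈ D', ∃ c ∈ C, G.descendant c d} ∧
      ∀ x ∈ D,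
        ¬ ∃ y ∈ ⋃₀ ({D' | H.IsComponent D' ∧ ∃ d ∈ D', ∃ c ∈ C, G.descendant c d} \ {D}),
          H.descendant y x :=
  exists_unique_maximal_component_general G H hH hle C hC
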